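/- Let F be a finite signature, ≿ a precedence on F, and A a simple monotone well-founded ordered F-algebra. Then the weighted path order >_wpo induced by A and ≿ has the subterm property: s >_wpo t whenever t is a proper subterm of s. Consequently >_wpo is a simplification order. -/

import Mathlib

/-- First-order terms over a signature `F` with arity function `ar` and variables `V`. -/
inductive Term (F : Type) (ar : F → ℕ) (V : Type) : Type where
  | var : V → Term F ar V
  | app : (f : F) → (Fin (ar f) → Term F ar V) → Term F ar V

namespace Term

variable {F V : Type} {ar : F → ℕ}

/-- Application of a substitution `σ : V → Term F ar V` to a term. -/
def subst (σ : V → Term F ar V) : Term F ar V → Term F ar V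
  | var v => σ v
  | app f args => app f (fun i => (args i).subst σ)

/-- Interpretation of a term in an `F`-algebra with carrier `A` under assignment `α`. -/
def eval {A : Type} (I : (f : F) → (Fin (ar f) → A) → A) (α : V → A) :
    Term F ar V → A
  | var v => α v
  | app f args => I f (fun i => (args i).eval I α)

/-- A term is a non-variable term (function application). -/
def IsApp : Term F ar V → Prop
  | var _ => False
  | app _ _ => True

end Term

section Algebra

variable {F V A : Type}

/-- `RC lt a b` : reflexive closure of the strict order `lt`, i.e. `a ≤ b`. -/
def RC (lt : A → A → Prop) (a b : A) : Prop := lt a b ∨ a = b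

variable (ar : F → ℕ) (I : (f : F) → (Fin (ar f) → A) → A) (lt : A → A → Prop)

/-- `s >_A t` : `[α](t) < [α](s)` for every assignment `α`. -/
def GTA (s t : Term F ar V) : Prop := ∀ α : V → A, lt (t.eval I α) (s.eval I α)

/-- `s ≥_A t` : `[α](t) ≤ [α](s)` for every assignment `α`. -/
def GEA (s t : Term F ar V) : Prop := ∀ α : V → A, RC lt (t.eval I α) (s.eval I α)

/-- The algebra is simple: `f_A(a_1, …, a_n) ≥ a_i`. -/
def Simple : Prop := ∀ (f : F) (as : Fin (ar f) → A) (i : Fin (ar f)), RC lt (as i) (I f as)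

/-- The algebra is weakly monotone: `a_i > b` implies
`f_A(a_1,…,a_i,…,a_n) ≥ f_A(a_1,…,b,…,a_n)`. -/
def WeaklyMonotone : Prop :=
  ∀ (f : F) (as : Fin (ar f) → A) (i : Fin (ar f)) (b : A),
    lt b (as i) → RC lt (I f (Function.update as i b)) (I f as)

end Algebra

section WPO

variable {F V A : Type} (ar : F → ℕ) (I : (f : F) → (Fin (ar f) → A) → A)
  (lt : A → A → Prop) (prec : F → F → Prop)

mutual
  /-- The weighted path order induced by the algebra `(A, I, lt)` and the precedence `prec`. -/
  inductive WPO : Term F ar V → Term F ar V → Prop where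
    /-- (1) `s >_A t`. -/
    | alg {s t} : GTA ar I lt s t → WPO s t
    /-- (2a) `s ≥_A t` and `s_i >_wpo t`. -/
    | sub {f ss t} (i : Fin (ar f)) :
        GEA ar I lt (Term.app f ss) t → WPO (ss i) t → WPO (Term.app f ss) t
    /-- (2a) `s ≥_A t` and `s_i = t`. -/
    | subEq {f ss t} (i : Fin (ar f)) :
        GEA ar I lt (Term.app f ss) t → ss i = t → WPO (Term.app f ss) t
    /-- (2b-i) `s ≥_A t`, `s >_wpo t_j` for all `j`, and `f ≻ g`. -/
    | prc {f ss g ts} :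
        GEA ar I lt (Term.app f ss) (Term.app g ts) →
        (∀ j, WPO (Term.app f ss) (ts j)) →
        prec f g → ¬ prec g f → WPO (Term.app f ss) (Term.app g ts)
    /-- (2b-ii) `s ≥_A t`, `s >_wpo t_j` for all `j`, `f ≿ g` and lex comparison of arguments. -/
    | lex {f ss g ts} :
        GEA ar I lt (Term.app f ss) (Term.app g ts) →
        (∀ j, WPO (Term.app f ss) (ts j)) →
        prec f g → WPOLex (List.ofFn ss) (List.ofFn ts) →
        WPO (Term.app f ss) (Term.app g ts)

  /-- Lexicographic extension of `WPO` to argument lists (of possibly different lengths). -/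
  inductive WPOLex : List (Term F ar V) → List (Term F ar V) → Prop where
    | head {s t l₁ l₂} : WPO s t → WPOLex (s :: l₁) (t :: l₂)
    | tail {s l₁ l₂} : WPOLex l₁ l₂ → WPOLex (s :: l₁) (s :: l₂)
    | longer {s l₁} : WPOLex (s :: l₁) []
end

end WPO

section SPO

variable {F V : Type} {ar : F → ℕ} (qge qgt : Term F ar V → Term F ar V → Prop)

mutual
  /-- The semantic path order induced by the order pair `(qge, qgt)` (`⊒∼`, `⊐`). -/
  inductive SPO : Term F ar V → Term F ar V → Prop where
    /-- (1) `s_i >_spo t`. -/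
    | sub {f ss t} (i : Fin (ar f)) : SPO (ss i) t → SPO (Term.app f ss) t
    /-- (1) `s_i = t`. -/
    | subEq {f ss t} (i : Fin (ar f)) : ss i = t → SPO (Term.app f ss) t
    /-- (2a) `s >_spo t_j` for all `j` and `s ⊐ t`. -/
    | gt {f ss g ts} : (∀ j, SPO (Term.app f ss) (ts j)) →
        qgt (Term.app f ss) (Term.app g ts) → SPO (Term.app f ss) (Term.app g ts)
    /-- (2b) `s >_spo t_j` for all `j`, `s ⊒∼ t` and lex comparison of arguments. -/
    | lex {f ss g ts} : (∀ j, SPO (Term.app f ss) (ts j)) →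
        qge (Term.app f ss) (Term.app g ts) →
        SPOLex (List.ofFn ss) (List.ofFn ts) → SPO (Term.app f ss) (Term.app g ts)

  /-- Lexicographic extension of `SPO` to argument lists. -/
  inductive SPOLex : List (Term F ar V) → List (Term F ar V) → Prop where
    | head {s t l₁ l₂} : SPO s t → SPOLex (s :: l₁) (t :: l₂)
    | tail {s l₁ l₂} : SPOLex l₁ l₂ → SPOLex (s :: l₁) (s :: l₂)
    | longer {s l₁} : SPOLex (s :: l₁) []
end

end SPO

section Props

variable {F V : Type} {ar : F → ℕ}

/-- Closure under contexts: replacing one argument. -/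
def ClosedCtx (R : Term F ar V → Term F ar V → Prop) : Prop :=
  ∀ (f : F) (args : Fin (ar f) → Term F ar V) (i : Fin (ar f)) (s t : Term F ar V),
    R s t → R (Term.app f (Function.update args i s)) (Term.app f (Function.update args i t))

/-- Closure under substitutions. -/
def ClosedSubst (R : Term F ar V → Term F ar V → Prop) : Prop :=
  ∀ (σ : V → Term F ar V) (s t : Term F ar V), R s t → R (s.subst σ) (t.subst σ)

/-- A reduction order: a well-founded strict order closed under contexts and substitutions. -/
def ReductionOrder (R : Term F ar V → Term F ar V → Prop) : Prop :=
  (∀ s, ¬ R s s) ∧ Transitive R ∧ WellFounded (fun s t => R t s) ∧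
    ClosedCtx R ∧ ClosedSubst R

/-- `Subterm t s` : `t` is a subterm of `s`. -/
inductive Subterm : Term F ar V → Term F ar V → Prop where
  | refl {t} : Subterm t t
  | arg {t f ss} (i : Fin (ar f)) : Subterm t (ss i) → Subterm t (Term.app f ss)

/-- `ProperSubterm t s` : `t` is a proper subterm of `s`. -/
def ProperSubterm (t s : Term F ar V) : Prop :=
  ∃ (f : F) (ss : Fin (ar f) → Term F ar V) (i : Fin (ar f)),
    s = Term.app f ss ∧ Subterm t (ss i)

/-- The rewrite relation of a TRS `R`: closure of the rules under substitutions and contexts. -/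
inductive Rewrite (R : Set (Term F ar V × Term F ar V)) : Term F ar V → Term F ar V → Prop where
  | rule {l r} (σ : V → Term F ar V) : (l, r) ∈ R → Rewrite R (l.subst σ) (r.subst σ)
  | ctx {s t} (f : F) (args : Fin (ar f) → Term F ar V) (i : Fin (ar f)) :
      Rewrite R s t →
      Rewrite R (Term.app f (Function.update args i s)) (Term.app f (Function.update args i t))

end Props

section Pair

variable {F V A : Type} (ar : F → ℕ) (I : (f : F) → (Fin (ar f) → A) → A)
  (lt : A → A → Prop) (prec : F → F → Prop)

/-- `s ⊒∼ t` : both non-variable, and `s >_A t`, or `s ≥_A t` and `root(s) ≿ root(t)`. -/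
def QGE (s t : Term F ar V) : Prop :=
  ∃ (f : F) (ss : Fin (ar f) → Term F ar V) (g : F) (ts : Fin (ar g) → Term F ar V),
    s = Term.app f ss ∧ t = Term.app g ts ∧
      (GTA ar I lt s t ∨ (GEA ar I lt s t ∧ prec f g))

/-- `s ⊐ t` : both non-variable, and `s >_A t`, or `s ≥_A t` and `root(s) ≻ root(t)`. -/
def QGT (s t : Term F ar V) : Prop :=
  ∃ (f : F) (ss : Fin (ar f) → Term F ar V) (g : F) (ts : Fin (ar g) → Term F ar V),
    s = Term.app f ss ∧ t = Term.app g ts ∧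
      (GTA ar I lt s t ∨ (GEA ar I lt s t ∧ prec f g ∧ ¬ prec g f))

variable (Im : (f : F) → (Fin (ar f) → A) → A)

/-- Interpretation of the marked term `t♯` (root symbol interpreted by `Im`). -/
def evalSharp (α : V → A) : Term F ar V → A
  | .var v => α v
  | .app f ts => Im f (fun i => (ts i).eval I α)

/-- `s♯ >_A t♯`. -/
def GTAS (s t : Term F ar V) : Prop :=
  ∀ α : V → A, lt (evalSharp ar I Im α t) (evalSharp ar I Im α s)

/-- `s♯ ≥_A t♯`. -/
def GEAS (s t : Term F ar V) : Prop :=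
  ∀ α : V → A, RC lt (evalSharp ar I Im α t) (evalSharp ar I Im α s)

/-- Marked version of `⊒∼` : `s♯ >_A t♯`, or `s♯ ≥_A t♯` and `root(s) ≿ root(t)`. -/
def QGES (s t : Term F ar V) : Prop :=
  ∃ (f : F) (ss : Fin (ar f) → Term F ar V) (g : F) (ts : Fin (ar g) → Term F ar V),
    s = Term.app f ss ∧ t = Term.app g ts ∧
      (GTAS ar I lt Im s t ∨ (GEAS ar I lt Im s t ∧ prec f g))

/-- Marked version of `⊐` : `s♯ >_A t♯`, or `s♯ ≥_A t♯` and `root(s) ≻ root(t)`. -/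
def QGTS (s t : Term F ar V) : Prop :=
  ∃ (f : F) (ss : Fin (ar f) → Term F ar V) (g : F) (ts : Fin (ar g) → Term F ar V),
    s = Term.app f ss ∧ t = Term.app g ts ∧
      (GTAS ar I lt Im s t ∨ (GEAS ar I lt Im s t ∧ prec f g ∧ ¬ prec g f))

/-- The generalized weighted path order: `s ≥_A t` and `s >_spo t` for the SPO induced
from the marked order pair. -/
def GWPO (s t : Term F ar V) : Prop :=
  GEA ar I lt s t ∧ SPO (QGES ar I lt prec Im) (QGTS ar I lt prec Im) s t

end Pair

/-!
Simplicity of `A` makes each term `≥_A` all its subterms, which is the side condition of (2a);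
the subterm property then follows by walking down the argument chain.
Transitivity is proved by induction on `|s| + |t| + |u|`, splitting on the rule that gives
`s >_wpo t` and, when that is (2b), on the rule that gives `t >_wpo u`. Irreflexivity follows by
induction on `s`: (2a) would give `s_i >_wpo s >_wpo s_i`, and (2b-ii) a smaller `s_i >_wpo s_i`.
Closure under substitutions is inherited rule by rule from `>_A` and `≥_A`; closure under
contexts uses (2b-ii) with equal root symbols, weak monotonicity supplying `≥_A`.
-/

variable {F V A : Type} {ar : F → ℕ} {I : (f : F) → (Fin (ar f) → A) → A}
  {lt : A → A → Prop} {prec : F → F → Prop}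

namespace Term

def size : Term F ar V → ℕ
  | var _ => 1
  | app _ ts => 1 + ∑ i, (ts i).size

theorem size_lt_size_app {f : F} (ts : Fin (ar f) → Term F ar V) (i : Fin (ar f)) :
    (ts i).size < (app f ts).size := by
  have := Finset.single_le_sum (fun j _ => Nat.zero_le (ts j).size) (Finset.mem_univ i)
  simp only [size]
  omega

theorem size_lt_size_app_of_mem {f : F} {ts : Fin (ar f) → Term F ar V} {t : Term F ar V}
    (h : t ∈ List.ofFn ts) : t.size < (app f ts).size := by
  obtain ⟨i, rfl⟩ := List.mem_ofFn.mp h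
  exact size_lt_size_app ts i

theorem eval_subst (σ : V → Term F ar V) (α : V → A) (t : Term F ar V) :
    (t.subst σ).eval I α = t.eval I (fun v => (σ v).eval I α) := by
  induction t with
  | var v => rfl
  | app f ts ih => exact congrArg (I f) (funext ih)

theorem eval_app_update {f : F} (args : Fin (ar f) → Term F ar V) (i : Fin (ar f))
    (s : Term F ar V) (α : V → A) :
    (app f (Function.update args i s)).eval I α =
      I f (Function.update (fun j => (args j).eval I α) i (s.eval I α)) := by
  simp only [eval, Function.apply_update (fun _ t => eval I α t)]

end Term

section Algebra

variable {s t u : Term F ar V}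

theorem GTA.gea (h : GTA ar I lt s t) : GEA ar I lt s t :=
  fun α => .inl (h α)

theorem GTA.subst (σ : V → Term F ar V) (h : GTA ar I lt s t) :
    GTA ar I lt (s.subst σ) (t.subst σ) := fun α => by
  simpa only [Term.eval_subst] using h _

theorem GEA.subst (σ : V → Term F ar V) (h : GEA ar I lt s t) :
    GEA ar I lt (s.subst σ) (t.subst σ) := fun α => by
  simpa only [Term.eval_subst] using h _

theorem GEA.app_update (hm : WeaklyMonotone ar I lt) {f : F} (args : Fin (ar f) → Term F ar V)
    (i : Fin (ar f)) (h : GEA ar I lt s t) :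
    GEA ar I lt (.app f (Function.update args i s)) (.app f (Function.update args i t)) := by
  intro α
  rw [Term.eval_app_update, Term.eval_app_update]
  rcases h α with h | h
  · simpa using hm f (Function.update (fun j => (args j).eval I α) i (s.eval I α)) i _
      (by rwa [Function.update_self])
  · exact .inr (by rw [h])

variable (htrans : Transitive lt)
include htrans

theorem RC.trans {a b c : A} (h₁ : RC lt a b) (h₂ : RC lt b c) : RC lt a c := by
  rcases h₁ with h₁ | rfl
  · rcases h₂ with h₂ | rfl
    exacts [.inl (htrans h₁ h₂), .inl h₁]
  · exact h₂

theorem lt_of_rc_of_lt {a b c : A} (h₁ : RC lt a b) (h₂ : lt b c) : lt a c := by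
  rcases h₁ with h₁ | rfl
  exacts [htrans h₁ h₂, h₂]

theorem lt_of_lt_of_rc {a b c : A} (h₁ : lt a b) (h₂ : RC lt b c) : lt a c := by
  rcases h₂ with h₂ | rfl
  exacts [htrans h₁ h₂, h₁]

theorem GEA.trans (h₁ : GEA ar I lt s t) (h₂ : GEA ar I lt t u) : GEA ar I lt s u :=
  fun α => (h₂ α).trans htrans (h₁ α)

theorem GTA.trans_gea (h₁ : GTA ar I lt s t) (h₂ : GEA ar I lt t u) : GTA ar I lt s u :=
  fun α => lt_of_rc_of_lt htrans (h₂ α) (h₁ α)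

theorem GEA.trans_gta (h₁ : GEA ar I lt s t) (h₂ : GTA ar I lt t u) : GTA ar I lt s u :=
  fun α => lt_of_lt_of_rc htrans (h₂ α) (h₁ α)

theorem GEA.of_subterm (hs : Simple ar I lt) (h : Subterm t s) : GEA ar I lt s t := by
  induction h with
  | refl => exact fun _ => .inr rfl
  | @arg f ss i _ ih =>
    have hi : GEA ar I lt (.app f ss) (ss i) := fun α => hs f (fun j => (ss j).eval I α) i
    exact hi.trans htrans ih

end Algebra

theorem WPO.gea {s t : Term F ar V} : WPO ar I lt prec s t → GEA ar I lt s t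
  | .alg h => h.gea
  | .sub _ hge _ | .subEq _ hge _ | .prc hge _ _ _ | .lex hge _ _ _ => hge

theorem WPO.of_prec {f g : F} {ss : Fin (ar f) → Term F ar V} {ts : Fin (ar g) → Term F ar V}
    (hge : GEA ar I lt (.app f ss) (.app g ts)) (hargs : ∀ j, WPO ar I lt prec (.app f ss) (ts j))
    (hfg : prec f g) (hcmp : ¬ prec g f ∨ WPOLex ar I lt prec (List.ofFn ss) (List.ofFn ts)) :
    WPO ar I lt prec (.app f ss) (.app g ts) :=
  hcmp.elim (.prc hge hargs hfg) (.lex hge hargs hfg)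

theorem WPO.app_of_subterm (htrans : Transitive lt) (hs : Simple ar I lt) {f : F}
    {ss : Fin (ar f) → Term F ar V} {t : Term F ar V} (i : Fin (ar f)) (h : Subterm t (ss i)) :
    WPO ar I lt prec (.app f ss) t := by
  have hge := GEA.of_subterm htrans hs (.arg i h)
  generalize hu : ss i = u at h
  induction h generalizing f ss i with
  | refl => exact .subEq i hge hu
  | arg j h ih => exact .sub i hge (hu ▸ ih j (GEA.of_subterm htrans hs (.arg j h)) rfl)

theorem WPOLex.ofFn {n : ℕ} {ss ts : Fin n → Term F ar V} (i : Fin n)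
    (heq : ∀ j < i, ss j = ts j) (h : WPO ar I lt prec (ss i) (ts i)) :
    WPOLex ar I lt prec (List.ofFn ss) (List.ofFn ts) := by
  induction n with
  | zero => exact i.elim0
  | succ n ih =>
    rw [List.ofFn_succ, List.ofFn_succ]
    cases i using Fin.cases with
    | zero => exact .head h
    | succ i =>
      rw [heq 0 (Fin.succ_pos i)]
      exact .tail (ih i (fun j hj => heq j.succ (Fin.succ_lt_succ_iff.mpr hj)) h)

theorem WPOLex.exists_mem_self {l : List (Term F ar V)} (h : WPOLex ar I lt prec l l) :
    ∃ a ∈ l, WPO ar I lt prec a a := by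
  induction l with
  | nil => cases h
  | cons a l ih =>
    cases h with
    | head h => exact ⟨a, List.mem_cons_self, h⟩
    | tail h =>
      obtain ⟨b, hb, h⟩ := ih h
      exact ⟨b, List.mem_cons_of_mem a hb, h⟩

theorem WPOLex.trans_of_mem {l₁ l₂ l₃ : List (Term F ar V)}
    (htrans : ∀ a ∈ l₁, ∀ b ∈ l₂, ∀ c ∈ l₃,
      WPO ar I lt prec a b → WPO ar I lt prec b c → WPO ar I lt prec a c)
    (h₁ : WPOLex ar I lt prec l₁ l₂) (h₂ : WPOLex ar I lt prec l₂ l₃) :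
    WPOLex ar I lt prec l₁ l₃ := by
  induction l₁ generalizing l₂ l₃ with
  | nil => cases h₁
  | cons a l₁ ih =>
    cases h₁ with
    | head hab =>
      cases h₂ with
      | head hbc => exact .head (htrans _ (by simp) _ (by simp) _ (by simp) hab hbc)
      | tail => exact .head hab
      | longer => exact .longer
    | tail h₁ =>
      cases h₂ with
      | head hbc => exact .head hbc
      | tail h₂ =>
        refine .tail (ih (fun a ha b hb c hc => htrans a ?_ b ?_ c ?_) h₁ h₂) <;> simp [*]
      | longer => exact .longer
    | longer => cases h₂

mutual

theorem WPO.subst (σ : V → Term F ar V) {s t : Term F ar V} :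
    WPO ar I lt prec s t → WPO ar I lt prec (s.subst σ) (t.subst σ)
  | .alg h => .alg (h.subst σ)
  | .sub i hge hw => .sub i (hge.subst σ) (hw.subst σ)
  | .subEq i hge heq => .subEq i (hge.subst σ) (congrArg (Term.subst σ) heq)
  | .prc hge hargs hfg hgf => .prc (hge.subst σ) (fun j => (hargs j).subst σ) hfg hgf
  | .lex hge hargs hfg hlex => .lex (hge.subst σ) (fun j => (hargs j).subst σ) hfg
      (by simpa only [List.map_ofFn, Function.comp_def] using hlex.subst σ)

theorem WPOLex.subst (σ : V → Term F ar V) {l₁ l₂ : List (Term F ar V)} :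
    WPOLex ar I lt prec l₁ l₂ →
      WPOLex ar I lt prec (l₁.map (Term.subst σ)) (l₂.map (Term.subst σ))
  | .head h => .head (h.subst σ)
  | .tail h => .tail (h.subst σ)
  | .longer => .longer

end

section Transitive

variable (htrans : Transitive lt) (prec_trans : ∀ f g h : F, prec f g → prec g h → prec f h)
include htrans prec_trans

/- `trans_app` is the case `s >_wpo t` by (2b); the second component of the measure lets `trans`
hand that case over at equal size. -/
set_option linter.unusedSectionVars false in
mutual

theorem WPO.trans {s t u : Term F ar V} (h₁ : WPO ar I lt prec s t)
    (h₂ : WPO ar I lt prec t u) : WPO ar I lt prec s u := by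
  cases h₁ with
  | alg h => exact .alg (h.trans_gea htrans h₂.gea)
  | @sub f ss _ i hge hw =>
    have := Term.size_lt_size_app ss i
    exact .sub i (hge.trans htrans h₂.gea) (WPO.trans hw h₂)
  | subEq i hge heq => exact .sub i (hge.trans htrans h₂.gea) (heq ▸ h₂)
  | prc hge hargs hfg hgf => exact WPO.trans_app hge hargs hfg (.inl hgf) h₂
  | lex hge hargs hfg hlex => exact WPO.trans_app hge hargs hfg (.inr hlex) h₂
termination_by (s.size + t.size + u.size, 1)
decreasing_by
  all_goals subst_vars
  all_goals first
    | exact Prod.Lex.right _ Nat.one_pos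
    | exact Prod.Lex.left _ _ (by omega)

theorem WPO.trans_app {f g : F} {ss : Fin (ar f) → Term F ar V} {ts : Fin (ar g) → Term F ar V}
    {u : Term F ar V} (hge : GEA ar I lt (.app f ss) (.app g ts))
    (hargs : ∀ j, WPO ar I lt prec (.app f ss) (ts j)) (hfg : prec f g)
    (hcmp : ¬ prec g f ∨ WPOLex ar I lt prec (List.ofFn ss) (List.ofFn ts))
    (h₂ : WPO ar I lt prec (.app g ts) u) : WPO ar I lt prec (.app f ss) u := by
  have h₁ : WPO ar I lt prec (.app f ss) (.app g ts) := .of_prec hge hargs hfg hcmp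
  cases h₂ with
  | alg h => exact .alg (hge.trans_gta htrans h)
  | sub j _ hw =>
    have := Term.size_lt_size_app ts j
    exact WPO.trans (hargs j) hw
  | subEq j _ heq => exact heq ▸ hargs j
  | @prc _ _ _ us hge₂ hargs₂ hgh hhg =>
    refine .prc (hge.trans htrans hge₂) (fun k => ?_) (prec_trans _ _ _ hfg hgh)
      (fun hhf => hhg (prec_trans _ _ _ hhf hfg))
    have := Term.size_lt_size_app us k
    exact WPO.trans h₁ (hargs₂ k)
  | @lex _ _ _ us hge₂ hargs₂ hgh hlex₂ =>
    refine .of_prec (hge.trans htrans hge₂) (fun k => ?_) (prec_trans _ _ _ hfg hgh)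
      (hcmp.imp (fun hgf hhf => hgf (prec_trans _ _ _ hgh hhf)) fun hlex => ?_)
    · have := Term.size_lt_size_app us k
      exact WPO.trans h₁ (hargs₂ k)
    · refine hlex.trans_of_mem (fun a ha b hb c hc hab hbc => ?_) hlex₂
      have := Term.size_lt_size_app_of_mem ha
      have := Term.size_lt_size_app_of_mem hb
      have := Term.size_lt_size_app_of_mem hc
      exact WPO.trans hab hbc
termination_by ((Term.app f ss).size + (Term.app g ts).size + u.size, 0)
decreasing_by
  all_goals subst_vars
  all_goals first
    | exact Prod.Lex.right _ Nat.one_pos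
    | exact Prod.Lex.left _ _ (by omega)

end

end Transitive

theorem WPO.irrefl [Nonempty A] (lt_irrefl : ∀ a, ¬ lt a a) (htrans : Transitive lt)
    (hs : Simple ar I lt) (prec_refl : ∀ f, prec f f)
    (prec_trans : ∀ f g h : F, prec f g → prec g h → prec f h) (s : Term F ar V) :
    ¬ WPO ar I lt prec s s := by
  induction s with
  | var v =>
    rintro (h | _)
    exact lt_irrefl _ (h fun _ => Classical.arbitrary A)
  | app f ss ih =>
    have hsub (i) : WPO ar I lt prec (.app f ss) (ss i) := .app_of_subterm htrans hs i .refl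
    rintro (h | ⟨i, -, hw⟩ | ⟨i, -, heq⟩ | ⟨-, -, -, hff⟩ | ⟨-, -, -, hlex⟩)
    · exact lt_irrefl _ (h fun _ => Classical.arbitrary A)
    · exact ih i (hw.trans htrans prec_trans (hsub i))
    · exact ih i (by simpa only [heq] using hsub i)
    · exact hff (prec_refl f)
    · obtain ⟨a, ha, haa⟩ := hlex.exists_mem_self
      obtain ⟨i, rfl⟩ := List.mem_ofFn.mp ha
      exact ih i haa

theorem WPO.app_update (htrans : Transitive lt) (hs : Simple ar I lt)
    (hm : WeaklyMonotone ar I lt) (prec_refl : ∀ f, prec f f) {f : F}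
    (args : Fin (ar f) → Term F ar V) (i : Fin (ar f)) {s t : Term F ar V}
    (h : WPO ar I lt prec s t) :
    WPO ar I lt prec (.app f (Function.update args i s)) (.app f (Function.update args i t)) := by
  refine .lex (h.gea.app_update hm args i) (fun j => ?_) (prec_refl f)
    (.ofFn i (fun j hj => by simp [hj.ne]) (by simpa using h))
  by_cases hj : j = i
  · subst hj
    rw [Function.update_self]
    have hsub : Subterm s (Function.update args j s j) := by
      rw [Function.update_self]
      exact .refl
    exact .sub j ((GEA.of_subterm htrans hs (.arg j hsub)).trans htrans h.gea)
      (by rwa [Function.update_self])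
  · simpa [hj] using WPO.app_of_subterm htrans hs (ss := Function.update args i s) j .refl

/-- For a finite signature, a precedence, and a simple monotone
well-founded algebra, the weighted path order has the subterm property, and consequently
it is a simplification order (a rewrite order with the subterm property). -/
theorem wpo_is_simplification_order
    {F V A : Type} [Fintype F] [Countable V] [Infinite V] [Nonempty A]
    (ar : F → ℕ) (I : (f : F) → (Fin (ar f) → A) → A) (lt : A → A → Prop)
    (lt_irrefl : ∀ a, ¬ lt a a) (lt_trans : Transitive lt)
    (lt_wf : WellFounded lt)
    (hsimple : Simple ar I lt) (hmono : WeaklyMonotone ar I lt)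
    (prec : F → F → Prop) (prec_refl : ∀ f, prec f f)
    (prec_trans : ∀ f g h, prec f g → prec g h → prec f h) :
    -- subterm property
    (∀ s t : Term F ar V, ProperSubterm t s → WPO ar I lt prec s t) ∧
    -- simplification order: a strict rewrite order …
    (∀ s, ¬ WPO (V := V) ar I lt prec s s) ∧
    Transitive (WPO (V := V) ar I lt prec) ∧
    ClosedCtx (WPO (V := V) ar I lt prec) ∧
    ClosedSubst (WPO (V := V) ar I lt prec) :=
  ⟨fun _ _ ⟨_, _, i, hs, ht⟩ => hs ▸ .app_of_subterm lt_trans hsimple i ht,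
    WPO.irrefl lt_irrefl lt_trans hsimple prec_refl prec_trans,
    fun _ _ _ h₁ h₂ => h₁.trans lt_trans prec_trans h₂,
    fun _ args i _ _ h => h.app_update lt_trans hsimple hmono prec_refl args i,
    fun σ _ _ h => h.subst σ⟩
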